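/- arXiv:1411.2645 — 3 statements merged into one kernel-verified Lean document; each statement's English description precedes it below -/
import Mathlib

section
/- Let T be a tree on n ≥ 3 vertices. If the sum of squared vertex degrees of T satisfies ∑ᵥ (deg v)² > n² − 3n + 6, then T is a star tree, i.e., ∑ᵥ (deg v)² = n(n−1) and T has a vertex of degree n−1. -/
/-- a tree on n ≥ 3 vertices whose sum of squared degrees exceeds
`n² - 3n + 6` (the quasi-star value) must be a star tree. -/
theorem stmt_3 {V : Type*} [Fintype V] [DecidableEq V] (G : SimpleGraph V)
    [DecidableRel G.Adj] (hT : G.IsTree) (n : ℕ) (hn : Fintype.card V = n) (h3 : 3 ≤ n)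
    (hsum : n ^ 2 - 3 * n + 6 < ∑ v, (G.degree v) ^ 2) :
    (∑ v, (G.degree v) ^ 2 = n * (n - 1)) ∧ ∃ v, G.degree v = n - 1 := by
  classical
  have hedges : G.edgeFinset.card + 1 = n := by
    rw [← hn]; exact hT.card_edgeFinset
  have hdsum : ∑ v, G.degree v = 2 * (n - 1) := by
    rw [G.sum_degrees_eq_twice_card_edges]
    omega
  have hpos : ∀ v : V, 1 ≤ G.degree v := by
    intro v
    rw [Nat.one_le_iff_ne_zero, ← Nat.pos_iff_ne_zero, G.degree_pos_iff_exists_adj]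
    have hcard : 1 < Fintype.card V := by omega
    obtain ⟨w, hw⟩ := Fintype.exists_ne_of_one_lt_card hcard v
    obtain ⟨p⟩ := hT.isConnected.preconnected v w
    exact ⟨p.getVert 1, SimpleGraph.Walk.adj_snd (p.not_nil_of_ne (Ne.symm hw))⟩
  have hlt : ∀ v : V, G.degree v ≤ n - 1 := by
    intro v
    have := G.degree_lt_card_verts v
    omega
  have hbig : ∃ u : V, 2 ≤ G.degree u := by
    by_contra hc
    push_neg at hc
    have h1 : ∑ v, G.degree v ≤ ∑ _v : V, 1 :=
      Finset.sum_le_sum fun i _ => by have := hc i; omega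
    have h2 : ∑ _v : V, (1 : ℕ) = n := by
      rw [Finset.sum_const, Finset.card_univ, hn, smul_eq_mul, mul_one]
    omega
  by_cases hstar : ∃ u : V, G.degree u = n - 1
  · obtain ⟨u, hu⟩ := hstar
    have hsplitd : G.degree u + ∑ v ∈ Finset.univ.erase u, G.degree v = ∑ v, G.degree v :=
      Finset.add_sum_erase Finset.univ (fun v => G.degree v) (Finset.mem_univ u)
    have hcardE : (Finset.univ.erase u).card = n - 1 := by
      rw [Finset.card_erase_of_mem (Finset.mem_univ u), Finset.card_univ, hn]
    have hrest : ∀ v ∈ Finset.univ.erase u, G.degree v = 1 := by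
      have e1 : ∑ v ∈ Finset.univ.erase u, (G.degree v - 1 + 1)
          = ∑ v ∈ Finset.univ.erase u, G.degree v :=
        Finset.sum_congr rfl fun v _ => by have := hpos v; omega
      rw [Finset.sum_add_distrib, Finset.sum_const, smul_eq_mul, mul_one, hcardE] at e1
      have e0 : ∑ v ∈ Finset.univ.erase u, (G.degree v - 1) = 0 := by omega
      intro v hv
      have := (Finset.sum_eq_zero_iff.mp e0) v hv
      have := hpos v
      omega
    constructor
    · have hsplit : (G.degree u) ^ 2 + ∑ v ∈ Finset.univ.erase u, (G.degree v) ^ 2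
          = ∑ v, (G.degree v) ^ 2 :=
        Finset.add_sum_erase Finset.univ (fun v => (G.degree v) ^ 2) (Finset.mem_univ u)
      have hones : ∑ v ∈ Finset.univ.erase u, (G.degree v) ^ 2 = n - 1 := by
        rw [Finset.sum_congr rfl (fun v hv => by rw [hrest v hv, one_pow]),
          Finset.sum_const, smul_eq_mul, mul_one, hcardE]
      rw [← hsplit, hones, hu]
      cases n with
      | zero => omega
      | succ m =>
        simp only [Nat.succ_sub_one]
        ring
    · exact ⟨u, hu⟩
  · exfalso
    push_neg at hstar
    have hle2 : ∀ v : V, G.degree v ≤ n - 2 := by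
      intro v
      have h1 := hlt v
      have h2 := hstar v
      omega
    obtain ⟨u, hu⟩ := hbig
    -- work over ℤ
    have hdsumZ : ∑ v, (G.degree v : ℤ) = 2 * (n : ℤ) - 2 := by
      have : ((∑ v, G.degree v : ℕ) : ℤ) = ∑ v, (G.degree v : ℤ) := by push_cast; rfl
      rw [← this, hdsum]
      omega
    have hposZ : ∀ v : V, (1 : ℤ) ≤ (G.degree v : ℤ) := fun v => by
      exact_mod_cast hpos v
    have hle2Z : ∀ v : V, (G.degree v : ℤ) ≤ (n : ℤ) - 2 := fun v => by
      have := hle2 v; omega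
    have huZ : (2 : ℤ) ≤ (G.degree u : ℤ) := by exact_mod_cast hu
    have hsplitZ : (G.degree u : ℤ) + ∑ v ∈ Finset.univ.erase u, (G.degree v : ℤ)
        = ∑ v, (G.degree v : ℤ) :=
      Finset.add_sum_erase Finset.univ (fun v => (G.degree v : ℤ)) (Finset.mem_univ u)
    have hcardE : ((Finset.univ.erase u).card : ℤ) = (n : ℤ) - 1 := by
      rw [Finset.card_erase_of_mem (Finset.mem_univ u), Finset.card_univ, hn]
      omega
    have honesE : ∑ _v ∈ Finset.univ.erase u, (1 : ℤ) = (n : ℤ) - 1 := by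
      rw [Finset.sum_const, nsmul_eq_mul, mul_one, hcardE]
    have hsval : ∑ v ∈ Finset.univ.erase u, ((G.degree v : ℤ) - 1)
        = (n : ℤ) - 1 - (G.degree u : ℤ) := by
      rw [Finset.sum_sub_distrib, honesE]
      omega
    have hterm_le : ∀ v ∈ Finset.univ.erase u,
        (G.degree v : ℤ) - 1 ≤ (n : ℤ) - 1 - (G.degree u : ℤ) := by
      intro v hv
      rw [← hsval]
      exact Finset.single_le_sum (f := fun w => ((G.degree w : ℤ) - 1))
        (fun i _ => sub_nonneg.2 (hposZ i)) hv
    have hsq_le : ∑ v ∈ Finset.univ.erase u, ((G.degree v : ℤ) - 1) ^ 2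
        ≤ ((n : ℤ) - 1 - (G.degree u : ℤ)) * ((n : ℤ) - 1 - (G.degree u : ℤ)) := by
      calc ∑ v ∈ Finset.univ.erase u, ((G.degree v : ℤ) - 1) ^ 2
          ≤ ∑ v ∈ Finset.univ.erase u,
              ((G.degree v : ℤ) - 1) * ((n : ℤ) - 1 - (G.degree u : ℤ)) := by
            apply Finset.sum_le_sum
            intro v hv
            have h1 := hposZ v
            have h2 := hterm_le v hv
            nlinarith
        _ = _ := by rw [← Finset.sum_mul, hsval]
    have hexp : ∑ v ∈ Finset.univ.erase u, (G.degree v : ℤ) ^ 2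
        = ∑ v ∈ Finset.univ.erase u, ((G.degree v : ℤ) - 1) ^ 2
          + 2 * (∑ v ∈ Finset.univ.erase u, ((G.degree v : ℤ) - 1)) + ((n : ℤ) - 1) := by
      rw [← honesE, Finset.mul_sum, ← Finset.sum_add_distrib, ← Finset.sum_add_distrib]
      exact Finset.sum_congr rfl fun v _ => by ring
    have hsplitSq : (G.degree u : ℤ) ^ 2 + ∑ v ∈ Finset.univ.erase u, (G.degree v : ℤ) ^ 2
        = ∑ v, (G.degree v : ℤ) ^ 2 :=
      Finset.add_sum_erase Finset.univ (fun v => (G.degree v : ℤ) ^ 2) (Finset.mem_univ u)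
    have hboundZ : ∑ v, (G.degree v : ℤ) ^ 2 ≤ (n : ℤ) ^ 2 - 3 * n + 6 := by
      rw [← hsplitSq, hexp, hsval]
      have hD2 := hle2Z u
      nlinarith [hsq_le, mul_nonneg (sub_nonneg.2 huZ) (sub_nonneg.2 hD2)]
    have hcast : ((∑ v, (G.degree v) ^ 2 : ℕ) : ℤ) = ∑ v, (G.degree v : ℤ) ^ 2 := by
      push_cast; rfl
    have h9 : 3 * n ≤ n ^ 2 := by nlinarith
    have hnn : ((n ^ 2 - 3 * n + 6 : ℕ) : ℤ) = (n : ℤ) ^ 2 - 3 * n + 6 := by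
      push_cast [Nat.cast_sub h9]
      ring
    have hsumZ : ((n ^ 2 - 3 * n + 6 : ℕ) : ℤ) < ((∑ v, (G.degree v) ^ 2 : ℕ) : ℤ) := by
      exact_mod_cast hsum
    rw [hcast, hnn] at hsumZ
    linarith
end

section
/- Let a ≥ 0 be a real number and let T be a tree on n vertices with n > 3a + 3. If the expected number of crossings of T under a uniformly random linear arrangement satisfies E₀[C] = (n/6)(n − 1 − ⟨k²⟩) ≤ a, then T is a star tree (it has a vertex of degree n−1). -/
set_option maxHeartbeats 1000000 in
/-- if `n > 3a + 3` and the expected number of crossings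
`E₀[C] = (n/6)(n - 1 - ⟨k²⟩)` of a tree on n vertices is at most `a`,
then the tree is a star tree. -/
theorem stmt_6 {V : Type*} [Fintype V] [DecidableEq V] (G : SimpleGraph V)
    [DecidableRel G.Adj] (hT : G.IsTree) (n : ℕ) (hn : Fintype.card V = n)
    (a : ℝ) (ha : 0 ≤ a) (hna : 3 * a + 3 < n)
    (hE : (n : ℝ) / 6 * ((n : ℝ) - 1 - (∑ v, ((G.degree v : ℝ)) ^ 2) / n) ≤ a) :
    ∃ v, G.degree v = n - 1 := by
  classical
  -- n ≥ 4
  have hn4 : 4 ≤ n := by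
    have h3 : (3:ℝ) < n := by linarith
    have : (3:ℕ) < n := by exact_mod_cast h3
    omega
  have hnpos : 0 < n := by omega
  have hcard2 : 1 < Fintype.card V := by omega
  -- every vertex has positive degree
  have hdeg1 : ∀ v : V, 1 ≤ G.degree v := by
    intro v
    rw [Nat.succ_le_iff, G.degree_pos_iff_exists_adj]
    obtain ⟨w, hw⟩ := Fintype.exists_ne_of_one_lt_card hcard2 v
    obtain ⟨p⟩ := hT.isConnected v w
    cases p with
    | nil => exact absurd rfl hw.symm
    | cons h q => exact ⟨_, h⟩
  -- degree sum
  have hEd : G.edgeFinset.card = n - 1 := by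
    have := hT.card_edgeFinset
    omega
  have hsum : ∑ v, G.degree v + 2 = 2 * n := by
    have := G.sum_degrees_eq_twice_card_edges
    rw [hEd] at this
    omega
  by_contra hstar
  push_neg at hstar
  -- e v = degree v - 1
  set e : V → ℕ := fun v => G.degree v - 1 with he
  have hde : ∀ v, G.degree v = e v + 1 := fun v => by
    have := hdeg1 v; simp [he]; omega
  have hSe : ∑ v, e v + 2 = n := by
    have : ∑ v, G.degree v = ∑ v, (e v + 1) := Finset.sum_congr rfl fun v _ => hde v
    rw [this, Finset.sum_add_distrib, Finset.sum_const, Finset.card_univ, hn] at hsum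
    simp at hsum; omega
  set S : ℕ := ∑ v, e v with hS
  -- max degree vertex
  have : Nonempty V := Fintype.card_pos_iff.mp (by omega)
  have hne : (Finset.univ : Finset V).Nonempty := Finset.univ_nonempty
  obtain ⟨u, -, hu⟩ := Finset.exists_max_image Finset.univ e hne
  -- u's degree is at most n-2
  have hdu : G.degree u + 2 ≤ n := by
    have h1 : G.degree u < n := by rw [← hn]; exact G.degree_lt_card_verts u
    have h2 : G.degree u ≠ n - 1 := hstar u
    omega
  have hmS : e u ≤ S := Finset.single_le_sum (fun v _ => Nat.zero_le _) (Finset.mem_univ u)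
  -- another vertex with degree ≥ 2, else u would be the star center
  have hw2 : ∃ w, w ≠ u ∧ 2 ≤ G.degree w := by
    by_contra hc
    push_neg at hc
    have hall : ∀ w ∈ Finset.univ.erase u, e w = 0 := by
      intro w hw
      have hwne := Finset.ne_of_mem_erase hw
      have := hc w hwne
      have := hdeg1 w
      simp [he]; omega
    have hrest : ∑ w ∈ Finset.univ.erase u, e w = 0 := Finset.sum_eq_zero hall
    have hsplit : e u + ∑ w ∈ Finset.univ.erase u, e w = S := by
      rw [hS, ← Finset.add_sum_erase _ _ (Finset.mem_univ u)]
    have : e u = S := by omega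
    have : G.degree u = n - 1 := by rw [hde u, this]; omega
    exact hstar u this
  obtain ⟨w, hwu, hw2⟩ := hw2
  -- e u ≥ 1 and sum over rest ≥ 1
  have hew1 : 1 ≤ e w := by have := hdeg1 w; simp [he]; omega
  have heu1 : 1 ≤ e u := le_trans hew1 (hu w (Finset.mem_univ w))
  have hsplit : e u + ∑ v ∈ Finset.univ.erase u, e v = S := by
    rw [hS, ← Finset.add_sum_erase _ _ (Finset.mem_univ u)]
  have hrest1 : 1 ≤ ∑ v ∈ Finset.univ.erase u, e v :=
    le_trans hew1 (Finset.single_le_sum (f := e) (fun v _ => Nat.zero_le _)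
      (Finset.mem_erase.2 ⟨hwu, Finset.mem_univ w⟩))
  set R : ℕ := ∑ v ∈ Finset.univ.erase u, e v with hR
  -- ∑_{v≠u} (e v)^2 ≤ R^2
  have hsq_rest : ∑ v ∈ Finset.univ.erase u, (e v)^2 ≤ R^2 := by
    calc ∑ v ∈ Finset.univ.erase u, (e v)^2
        ≤ ∑ v ∈ Finset.univ.erase u, e v * R := by
          apply Finset.sum_le_sum
          intro v hv
          have : e v ≤ R := Finset.single_le_sum (f := e) (fun x _ => Nat.zero_le _) hv
          calc (e v)^2 = e v * e v := sq (e v) ▸ by ring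
            _ ≤ e v * R := Nat.mul_le_mul_left _ this
      _ = R^2 := by rw [← Finset.sum_mul, ← hR]; ring
  -- total: ∑ e^2 ≤ (e u)^2 + R^2 ≤ (S-1)^2 + 1, written additively
  have hsq_total : ∑ v, (e v)^2 + 2 * S ≤ S^2 + 2 := by
    have h1 : ∑ v, (e v)^2 = (e u)^2 + ∑ v ∈ Finset.univ.erase u, (e v)^2 :=
      (Finset.add_sum_erase _ _ (Finset.mem_univ u)).symm
    have hmp : e u + R ≤ e u * R + 1 := by
      have := Nat.one_le_iff_ne_zero.mp heu1
      have := Nat.one_le_iff_ne_zero.mp hrest1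
      nlinarith [heu1, hrest1]
    have hS' : e u + R = S := hsplit
    nlinarith [hsq_rest, hS']
  -- degree square sum bound
  have hd2 : ∑ v, (G.degree v)^2 + 3 * n ≤ n^2 + 6 := by
    have h1 : ∑ v, (G.degree v)^2 = (∑ v, (e v)^2) + 2 * S + n := by
      calc ∑ v, (G.degree v)^2 = ∑ v, ((e v)^2 + 2 * e v + 1) := by
            apply Finset.sum_congr rfl
            intro v _
            rw [hde v]; ring
        _ = (∑ v, (e v)^2) + 2 * S + n := by
            rw [Finset.sum_add_distrib, Finset.sum_add_distrib, ← Finset.mul_sum,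
              Finset.sum_const, Finset.card_univ, hn, ← hS]
            simp
    have hSn : S + 2 = n := hSe
    rw [h1, ← hSn]
    have hx : (S + 2)^2 = S^2 + 4*S + 4 := by ring
    linarith [hsq_total]
  -- cast to ℝ and derive contradiction
  have hd2R : (∑ v, ((G.degree v : ℝ))^2) + 3 * n ≤ (n:ℝ)^2 + 6 := by
    exact_mod_cast hd2
  have hnR : (0:ℝ) < n := by exact_mod_cast hnpos
  have hEe : (n:ℝ) * ((n:ℝ) - 1) - (∑ v, ((G.degree v : ℝ))^2) ≤ 6 * a := by
    have h6 : (n:ℝ) / 6 * ((n : ℝ) - 1 - (∑ v, ((G.degree v : ℝ)) ^ 2) / n)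
        = ((n:ℝ) * ((n:ℝ) - 1) - (∑ v, ((G.degree v : ℝ))^2)) / 6 := by
      field_simp
    rw [h6] at hE
    linarith
  nlinarith [hd2R, hEe, hna, hnR]
end

section
/- For every tree T on n ≥ 2 vertices, the sum of squared vertex degrees satisfies ∑_v (deg v)² ≤ n(n−1), with equality if and only if T is a star tree (has a vertex of degree n−1). Equivalently, ⟨k²⟩ ≤ n−1, so the quantity B₁ = n(n−1)(n−1−⟨k²⟩) is nonnegative. -/
lemma aux_le (d n : ℕ) (h1 : 1 ≤ d) (h2 : d + 1 ≤ n) : d ^ 2 + n ≤ n * d + 1 := by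
  nlinarith

lemma aux_eq (d n : ℕ) (h1 : 1 ≤ d) (h2 : d + 1 ≤ n) (h : d ^ 2 + n = n * d + 1) :
    d = 1 ∨ d + 1 = n := by
  by_contra hc
  push_neg at hc
  obtain ⟨hd1, hd2⟩ := hc
  have : 2 ≤ d := by omega
  have : d + 2 ≤ n := by omega
  nlinarith

/-- for a tree on n ≥ 2 vertices, `∑_v (deg v)² ≤ n(n-1)` with equality
iff the tree is a star tree; equivalently `⟨k²⟩ ≤ n - 1`, so `B₁ ≥ 0`. -/
theorem stmt_13 {V : Type*} [Fintype V] [DecidableEq V] (G : SimpleGraph V)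
    [DecidableRel G.Adj] (hT : G.IsTree) (n : ℕ) (hn : Fintype.card V = n) (h2 : 2 ≤ n) :
    (∑ v, (G.degree v) ^ 2 ≤ n * (n - 1)) ∧
    (∑ v, (G.degree v) ^ 2 = n * (n - 1) ↔ ∃ v, G.degree v = n - 1) ∧
    ((∑ v, ((G.degree v : ℝ)) ^ 2) / n ≤ (n : ℝ) - 1) ∧
    (0 ≤ (n : ℝ) * ((n : ℝ) - 1) * ((n : ℝ) - 1 - (∑ v, ((G.degree v : ℝ)) ^ 2) / n)) := by
  classical
  have hdegpos : ∀ v : V, 1 ≤ G.degree v := by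
    intro v
    obtain ⟨u, hu⟩ := Fintype.exists_ne_of_one_lt_card (by omega : 1 < Fintype.card V) v
    obtain ⟨p⟩ := hT.isConnected.preconnected v u
    have hnil : ¬ p.Nil := SimpleGraph.Walk.not_nil_of_ne (Ne.symm hu)
    exact (G.degree_pos_iff_exists_adj v).2 ⟨_, p.adj_snd hnil⟩
  have hdegle : ∀ v : V, G.degree v + 1 ≤ n := by
    intro v
    have := G.degree_lt_card_verts v
    omega
  have hsum : ∑ v, G.degree v = 2 * (n - 1) := by
    rw [G.sum_degrees_eq_twice_card_edges]
    have := hT.card_edgeFinset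
    omega
  set S := ∑ v, (G.degree v) ^ 2 with hS
  have hsum1 : S + n * n = ∑ v, ((G.degree v) ^ 2 + n) := by
    rw [Finset.sum_add_distrib, Finset.sum_const, Finset.card_univ, hn, smul_eq_mul]
  have hsum2 : ∑ v, (n * G.degree v + 1) = n * (2 * (n - 1)) + n := by
    rw [Finset.sum_add_distrib, ← Finset.mul_sum, hsum, Finset.sum_const,
      Finset.card_univ, hn, smul_eq_mul, mul_one]
  have hptle : ∀ v ∈ Finset.univ, (G.degree v) ^ 2 + n ≤ n * G.degree v + 1 :=
    fun v _ => aux_le _ _ (hdegpos v) (hdegle v)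
  have hle : S ≤ n * (n - 1) := by
    have h := Finset.sum_le_sum hptle
    rw [← hsum1, hsum2] at h
    have hn1 : n - 1 + 1 = n := by omega
    nlinarith [h, hn1]
  refine ⟨hle, ?_, ?_, ?_⟩
  · constructor
    · intro hE
      have hsumeq : ∑ v, ((G.degree v) ^ 2 + n) = ∑ v, (n * G.degree v + 1) := by
        rw [← hsum1, hsum2, hE]
        have hn1 : n - 1 + 1 = n := by omega
        nlinarith [hn1]
      have hpt := (Finset.sum_eq_sum_iff_of_le hptle).1 hsumeq
      by_contra hno
      push_neg at hno
      have hall1 : ∀ v : V, G.degree v = 1 := by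
        intro v
        rcases aux_eq _ _ (hdegpos v) (hdegle v) (hpt v (Finset.mem_univ v)) with h | h
        · exact h
        · exact absurd (by omega : G.degree v = n - 1) (hno v)
      have : ∑ v, G.degree v = n := by
        simp [hall1, hn]
      have hn2 : n = 2 := by omega
      have : Nonempty V := hT.isConnected.nonempty
      exact hno (Classical.arbitrary V) (by rw [hall1, hn2])
    · rintro ⟨v0, hv0⟩
      have hcarde : (Finset.univ.erase v0).card = n - 1 := by
        rw [Finset.card_erase_of_mem (Finset.mem_univ v0), Finset.card_univ, hn]
      have hsplit : ∑ v ∈ Finset.univ.erase v0, G.degree v = n - 1 := by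
        have h := Finset.add_sum_erase Finset.univ (fun v => G.degree v) (Finset.mem_univ v0)
        omega
      have hconst : ∑ v ∈ Finset.univ.erase v0, (1 : ℕ) =
          ∑ v ∈ Finset.univ.erase v0, G.degree v := by
        rw [Finset.sum_const, hcarde, smul_eq_mul, mul_one, hsplit]
      have hone : ∀ v ∈ Finset.univ.erase v0, G.degree v = 1 := by
        intro v hv
        exact ((Finset.sum_eq_sum_iff_of_le (fun v _ => hdegpos v)).1 hconst v hv).symm
      have : S = (n - 1) ^ 2 + (n - 1) := by
        rw [hS, ← Finset.add_sum_erase Finset.univ _ (Finset.mem_univ v0), hv0,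
          Finset.sum_congr rfl (fun v hv => by rw [hone v hv, one_pow]),
          Finset.sum_const, hcarde, smul_eq_mul, mul_one]
      rw [this]
      have hn1 : n - 1 + 1 = n := by omega
      nlinarith [hn1]
  all_goals {
    have hcast : ∑ v, ((G.degree v : ℝ)) ^ 2 = (S : ℝ) := by push_cast [hS]; ring_nf
    have hnpos : (0 : ℝ) < n := by positivity
    have hSle : (S : ℝ) ≤ n * (n - 1) := by
      have := hle
      have h1 : ((n * (n - 1) : ℕ) : ℝ) = (n : ℝ) * ((n : ℝ) - 1) := by
        push_cast [Nat.cast_sub (by omega : 1 ≤ n)]; ring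
      calc (S : ℝ) ≤ ((n * (n - 1) : ℕ) : ℝ) := by exact_mod_cast hle
        _ = (n : ℝ) * ((n : ℝ) - 1) := h1
    have hdiv : (∑ v, ((G.degree v : ℝ)) ^ 2) / n ≤ (n : ℝ) - 1 := by
      rw [hcast, div_le_iff₀ hnpos]
      nlinarith
    first
    | exact hdiv
    | { have h2r : (2:ℝ) ≤ (n:ℝ) := by exact_mod_cast h2
        apply mul_nonneg (mul_nonneg (le_of_lt hnpos) (by linarith))
        linarith }
  }
end
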